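/- Let κ be an infinite cardinal, λ an infinite cardinal, and α an ordinal. If NPr⁰_α(λ; κ) holds (i.e., some model with universe λ and vocabulary of cardinality ≤ κ has rk⁰(M; <κ⁺) < α), then NPr⁰_{α+1}(λ⁺; κ) holds (some model with universe λ⁺ and vocabulary of cardinality ≤ κ has rk⁰(M; <κ⁺) < α + 1). -/

import Mathlib

open FirstOrder Cardinal

universe u

namespace Sh522

/-- `a ∈ clLt L M κ B` iff `a` is in the `<κ`-closure of `B` in `M`:
for some quantifier-free formula `φ(y, x₁, …, xₙ)` and parameters `b` from `B`,
`M ⊨ φ[a, b]` and the set of solutions of `φ(−, b)` has cardinality `< κ`. -/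
def clLt (L : FirstOrder.Language.{u, u}) (M : Type u) [L.Structure M]
    (κ : Cardinal.{u}) (B : Set M) : Set M :=
  {a | ∃ (n : ℕ) (φ : L.Formula (Fin (n + 1))),
      FirstOrder.Language.BoundedFormula.IsQF φ ∧
      ∃ b : Fin n → M, (∀ i, b i ∈ B) ∧
        φ.Realize (Fin.cons a b) ∧
        Cardinal.mk {x : M // φ.Realize (Fin.cons x b)} < κ}

/-- `rk^l(w, M; <κ) ≥ 0`. -/
def rkBase (L : FirstOrder.Language.{u, u}) (M : Type u) [L.Structure M]
    (κ : Cardinal.{u}) (w : Set M) : Prop :=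
  w.Finite ∧ w.Nonempty ∧ ∀ a ∈ w, a ∉ clLt L M κ (w \ {a})

/-- The successor step of the rank: `rk^l(w, M; <κ) ≥ β + 1` where `P` is
`rk^l(−, M; <κ) ≥ β`. -/
def rkStep (L : FirstOrder.Language.{u, u}) (M : Type u) [L.Structure M]
    (l : ℕ) (κ : Cardinal.{u}) (P : Set M → Prop) (w : Set M) : Prop :=
  w.Finite ∧ w.Nonempty ∧
  ∀ (n : ℕ) (a : Fin n → M), Function.Injective a → Set.range a = w →
    ∀ (k : Fin n) (φ : L.Formula (Fin n)),
      FirstOrder.Language.BoundedFormula.IsQF φ → φ.Realize a →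
      ∃ b : Fin 2 → Fin n → M,
        P (Set.range fun p : Fin 2 × Fin n => b p.1 p.2) ∧
        (∀ i : Fin 2, φ.Realize (b i)) ∧
        b 0 k ≠ b 1 k ∧
        (∀ m : Fin n, m ≠ k → b 0 m = b 1 m) ∧
        (l = 0 → ∀ m : Fin n, b 0 m = a m)

/-- `rkGe L M l κ α w` says `rk^l(w, M; <κ) ≥ α`. -/
noncomputable def rkGe (L : FirstOrder.Language.{u, u}) (M : Type u) [L.Structure M]
    (l : ℕ) (κ : Cardinal.{u}) (α : Ordinal.{u}) : Set M → Prop :=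
  Ordinal.limitRecOn (motive := fun _ => Set M → Prop) α
    (rkBase L M κ)
    (fun _ ih => rkStep L M l κ ih)
    (fun o _ ih w => ∀ (β : Ordinal.{u}) (h : β < o), ih β h w)

/-- `Pr l α lam bound θ` is `Pr^l_α(lam; <bound, θ)`: every model with universe of
cardinality `lam` and vocabulary of cardinality `≤ θ` has `rk^l(M; <bound) ≥ α`,
where `rk^l(M; <bound) = sup { rk^l(w, M; <bound) + 1 : w ∈ [M]* }`. -/
def Pr (l : ℕ) (α : Ordinal.{u}) (lam bound θ : Cardinal.{u}) : Prop :=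
  ∀ (L : FirstOrder.Language.{u, u}) (M : Type u) (S : L.Structure M),
    Cardinal.mk M = lam → L.card ≤ θ →
    ∀ β < α, ∃ w : Set M, w.Finite ∧ w.Nonempty ∧ @rkGe L M S l bound β w

/-!
Code `M₀` into `λ⁺`: fix for every `y < λ⁺` an injection `H(·, y)` of the initial segment
below `y` into `M₀`, and for every formula `ψ(x₁, …, xₙ)` of `M₀` a relation `R_ψ(y, x₁, …, xₙ)`
saying that all `xᵢ < y` and `M₀ ⊨ ψ[H(x₁, y), …, H(xₙ, y)]`; there are at most `κ` such symbols.
By induction on `β`, if a finite set `u` with maximum `y` and at least two elements has rank `≥ β`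
in this model, then `H(u ∖ {y}, y)` has rank `≥ β` in `M₀`: a formula `ψ` over the image becomes
`R_ψ` over `u`, and `H(·, y)` maps the solutions of `R_ψ` injectively into those of `ψ`.
Rank `≥ β + 1` of any set yields a set of rank `≥ β` with two elements, so a model on `λ⁺` of
rank `≥ α + 1` would give `M₀` rank `≥ α`.
-/

open FirstOrder.Language

section Rank

variable {L : FirstOrder.Language.{u, u}} {M : Type u} [L.Structure M] {l : ℕ} {κ : Cardinal.{u}}

theorem rkGe_zero : rkGe L M l κ 0 = rkBase L M κ :=
  Ordinal.limitRecOn_zero _ _ _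

theorem rkGe_add_one (β : Ordinal.{u}) :
    rkGe L M l κ (β + 1) = rkStep L M l κ (rkGe L M l κ β) :=
  Ordinal.limitRecOn_add_one _ _ _ _

theorem rkGe_of_isSuccLimit {o : Ordinal.{u}} (ho : Order.IsSuccLimit o) :
    rkGe L M l κ o = fun w => ∀ β < o, rkGe L M l κ β w :=
  Ordinal.limitRecOn_limit _ _ _ _ ho

theorem clLt_mono {B C : Set M} (h : B ⊆ C) : clLt L M κ B ⊆ clLt L M κ C := by
  rintro a ⟨n, φ, hφ, b, hb, hreal, hsmall⟩
  exact ⟨n, φ, hφ, b, fun i => h (hb i), hreal, hsmall⟩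

theorem exists_nontrivial_rkGe_of_rkGe_add_one {β : Ordinal.{u}} {w : Set M}
    (h : rkGe L M l κ (β + 1) w) :
    ∃ u : Set M, u.Finite ∧ u.Nontrivial ∧ rkGe L M l κ β u := by
  rw [rkGe_add_one] at h
  obtain ⟨hfin, ⟨a, ha⟩, hstep⟩ := h
  obtain ⟨n, f, rfl⟩ := hfin.fin_embedding
  obtain ⟨k, -⟩ := ha
  obtain ⟨b, hrk, -, hk, -⟩ :=
    hstep n f f.injective rfl k ⊤ BoundedFormula.IsQF.top (Formula.realize_top.2 trivial)
  exact ⟨_, Set.finite_range _, ⟨_, ⟨(0, k), rfl⟩, _, ⟨(1, k), rfl⟩, hk⟩, hrk⟩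

end Rank

section Fiber

variable (L₀ : FirstOrder.Language.{u, u}) {M₀ : Type u} [L₀.Structure M₀]
  {N : Type u} [LinearOrder N] (H : N → N → M₀)

def fiberLanguage : FirstOrder.Language.{u, u} where
  Functions _ := PEmpty
  Relations
    | 0 => PEmpty
    | n + 1 => L₀.Formula (Fin n)

abbrev fiberStructure : (fiberLanguage L₀).Structure N where
  funMap f _ := PEmpty.elim f
  RelMap {n} r v :=
    match n, r, v with
    | 0, r, _ => PEmpty.elim r
    | m + 1, ψ, v => (∀ i : Fin m, v i.succ < v 0) ∧ ψ.Realize fun i => H (v i.succ) (v 0)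

def fiberRel {t m : ℕ} (ψ : L₀.Formula (Fin m)) (σ : Fin (m + 1) → Fin t) :
    (fiberLanguage L₀).Formula (Fin t) :=
  Relations.formula (L := fiberLanguage L₀) (n := m + 1) ψ fun j => Term.var (σ j)

theorem isQF_fiberRel {t m : ℕ} (ψ : L₀.Formula (Fin m)) (σ : Fin (m + 1) → Fin t) :
    (fiberRel L₀ ψ σ).IsQF :=
  (BoundedFormula.IsAtomic.rel _ _).isQF

theorem realize_fiberRel {t m : ℕ} (ψ : L₀.Formula (Fin m)) (σ : Fin (m + 1) → Fin t)
    (v : Fin t → N) :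
    @Formula.Realize _ N (fiberStructure L₀ H) _ (fiberRel L₀ ψ σ) v ↔
      (∀ i : Fin m, v (σ i.succ) < v (σ 0)) ∧ ψ.Realize fun i => H (v (σ i.succ)) (v (σ 0)) :=
  Iff.rfl

theorem card_fiberLanguage_le {κ : Cardinal.{u}} (hκ : ℵ₀ ≤ κ) (hL₀ : L₀.card ≤ κ) :
    (fiberLanguage L₀).card ≤ κ := by
  have hrel : ∀ n, #((fiberLanguage L₀).Relations n) ≤ κ
    | 0 => by simp [fiberLanguage]
    | n + 1 => calc
        #(L₀.Formula (Fin n)) ≤ #(Σ k, L₀.BoundedFormula (Fin n) k) :=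
          mk_le_of_injective (sigma_mk_injective (i := 0))
        _ ≤ max ℵ₀ (lift #(Fin n) + lift L₀.card) := BoundedFormula.card_le
        _ ≤ κ := by
          simp only [mk_fin, lift_natCast, lift_id']
          exact max_le hκ ((add_le_add ((natCast_lt_aleph0 (n := n)).le.trans hκ) hL₀).trans
            (add_eq_self hκ).le)
  rw [card_eq_card_functions_add_card_relations]
  calc _ ≤ 0 + Cardinal.sum fun _ : ℕ => κ := by
        gcongr
        · simp [fiberLanguage]
        · exact (lift_id _).trans_le (hrel _)
    _ = κ := by simp [aleph0_mul_eq hκ]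

def fiberImage (y : N) (u : Set N) : Set M₀ :=
  (fun x => H x y) '' (u \ {y})

variable {L₀ H} {κ : Cardinal.{u}}

theorem mem_clLt_insert_of_mem_clLt_image (hH : ∀ y, Set.InjOn (fun x => H x y) (Set.Iio y))
    {a y : N} {B : Set N} (ha : a < y)
    (hB : B ⊆ Set.Iio y) (h : H a y ∈ clLt L₀ M₀ κ ((fun x => H x y) '' B)) :
    a ∈ @clLt _ N (fiberStructure L₀ H) κ (insert y B) := by
  let := fiberStructure L₀ H
  obtain ⟨m, ψ, -, b, hb, hreal, hsmall⟩ := h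
  choose xs hxsB hxs using hb
  -- The variables are `(z, y, xs)`, while `R_ψ` expects its top point `y` first.
  have hsol : ∀ z, (fiberRel L₀ ψ (Equiv.swap 0 1)).Realize (Fin.cons z (Fin.cons y xs)) ↔
      z < y ∧ ψ.Realize (Fin.cons (H z y) b) := by
    have hσ (i : Fin m) : Equiv.swap (0 : Fin (m + 2)) 1 i.succ.succ = i.succ.succ :=
      Equiv.swap_apply_of_ne_of_ne (Fin.succ_ne_zero _)
        ((Fin.succ_injective _).ne (Fin.succ_ne_zero _))
    have hpt (z : N) :
        (fun i => H ((Fin.cons z (Fin.cons y xs) : Fin (m + 2) → N) (Equiv.swap 0 1 i.succ)) y) =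
          Fin.cons (H z y) b := by
      ext i
      cases i using Fin.cases <;> simp [hσ, ← hxs]
    intro z
    rw [realize_fiberRel]
    have hxsy (i : Fin m) : xs i < y := hB (hxsB i)
    simp [Fin.forall_fin_succ, hσ, hpt, hxsy]
  refine ⟨m + 1, _, isQF_fiberRel L₀ ψ _, Fin.cons y xs, Fin.cases (Set.mem_insert y B)
    fun i => Set.mem_insert_of_mem y (hxsB i), (hsol a).2 ⟨ha, hreal⟩, ?_⟩
  refine (mk_le_of_injective (f := fun z => ⟨H z.1 y, ((hsol z.1).1 z.2).2⟩) ?_).trans_lt hsmall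
  exact fun z₁ z₂ hz => Subtype.ext (hH y ((hsol _).1 z₁.2).1 ((hsol _).1 z₂.2).1
    (congrArg Subtype.val hz))

theorem rkBase_fiberImage (hH : ∀ y, Set.InjOn (fun x => H x y) (Set.Iio y)) {u : Set N} {y : N}
    (hy : IsGreatest u y) (hne : (u \ {y}).Nonempty)
    (h : @rkBase _ N (fiberStructure L₀ H) κ u) : rkBase L₀ M₀ κ (fiberImage H y u) := by
  let := fiberStructure L₀ H
  obtain ⟨hfin, -, hcl⟩ := h
  refine ⟨hfin.sdiff.image _, hne.image _, ?_⟩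
  rintro _ ⟨a, ⟨hau, hay⟩, rfl⟩ hmem
  have hsub : fiberImage H y u \ {H a y} ⊆ (fun x => H x y) '' (u \ {y, a}) := by
    rintro _ ⟨⟨x, hx, rfl⟩, hxa⟩
    exact ⟨x, ⟨hx.1, by rintro (rfl | rfl); exacts [hx.2 rfl, hxa rfl]⟩, rfl⟩
  refine hcl a hau (clLt_mono ?_ (mem_clLt_insert_of_mem_clLt_image hH
    (lt_of_le_of_ne (hy.2 hau) hay) ?_ (clLt_mono hsub hmem)))
  · rintro x (rfl | ⟨hxu, hxya⟩)
    · exact ⟨hy.1, fun h => hay (h ▸ rfl)⟩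
    · exact ⟨hxu, fun h => hxya (Or.inr h)⟩
  · rintro x ⟨hxu, hxya⟩
    exact lt_of_le_of_ne (hy.2 hxu) fun h => hxya (Or.inl h)

theorem exists_cons_enumeration_of_range_eq_fiberImage
    (hH : ∀ y, Set.InjOn (fun x => H x y) (Set.Iio y)) {u : Set N} {y : N} (hy : IsGreatest u y)
    {m : ℕ} {a : Fin m → M₀} (ha : Function.Injective a) (hrange : Set.range a = fiberImage H y u) :
    ∃ xs : Fin m → N, (∀ i, xs i < y) ∧ (∀ i, H (xs i) y = a i) ∧
      Function.Injective (Fin.cons y xs : Fin (m + 1) → N) ∧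
      Set.range (Fin.cons y xs : Fin (m + 1) → N) = u := by
  have hpre (i : Fin m) : ∃ x ∈ u \ {y}, H x y = a i := hrange.subset (Set.mem_range_self i)
  choose xs hxs hxsa using hpre
  have hlt (i : Fin m) : xs i < y := lt_of_le_of_ne (hy.2 (hxs i).1) (hxs i).2
  refine ⟨xs, hlt, hxsa, Fin.cons_injective_iff.2 ⟨?_, ?_⟩, ?_⟩
  · rintro ⟨i, hi⟩
    exact (hlt i).ne hi
  · exact fun i j hij => ha (by rw [← hxsa, ← hxsa, hij])
  · rw [Fin.range_cons]
    refine subset_antisymm (Set.insert_subset hy.1 ?_) fun x hx => ?_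
    · rintro _ ⟨i, rfl⟩
      exact (hxs i).1
    · by_cases hxy : x = y
      · exact hxy ▸ Set.mem_insert x _
      obtain ⟨i, hi⟩ : H x y ∈ Set.range a := hrange ▸ ⟨x, ⟨hx, hxy⟩, rfl⟩
      refine Set.mem_insert_of_mem y ⟨i, hH y (hlt i) (lt_of_le_of_ne (hy.2 hx) hxy) ?_⟩
      simp only [hxsa, hi]

theorem fiberImage_range {ι : Type*} {m : ℕ} {y : N} {b : ι → Fin (m + 1) → N}
    (hb0 : ∀ j, b j 0 = y) (hlt : ∀ j (i : Fin m), b j i.succ < y) :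
    fiberImage H y (Set.range fun p : ι × Fin (m + 1) => b p.1 p.2) =
      Set.range fun p : ι × Fin m => H (b p.1 p.2.succ) y := by
  ext z
  constructor
  · rintro ⟨_, ⟨⟨⟨j, i⟩, rfl⟩, hy⟩, rfl⟩
    cases i using Fin.cases with
    | zero => exact absurd (hb0 j) hy
    | succ i => exact ⟨(j, i), rfl⟩
  · rintro ⟨⟨j, i⟩, rfl⟩
    exact ⟨_, ⟨⟨(j, i.succ), rfl⟩, (hlt j i).ne⟩, rfl⟩

theorem rkStep_fiberImage (hH : ∀ y, Set.InjOn (fun x => H x y) (Set.Iio y))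
    {P : Set N → Prop} {Q : Set M₀ → Prop}
    (hPQ : ∀ u y, IsGreatest u y → (u \ {y}).Nonempty → P u → Q (fiberImage H y u))
    {u : Set N} {y : N} (hy : IsGreatest u y) (hne : (u \ {y}).Nonempty)
    (h : @rkStep _ N (fiberStructure L₀ H) 0 κ P u) : rkStep L₀ M₀ 0 κ Q (fiberImage H y u) := by
  let := fiberStructure L₀ H
  obtain ⟨hfin, -, hstep⟩ := h
  refine ⟨hfin.sdiff.image _, hne.image _, ?_⟩
  intro m a ha hrange k ψ _ hreal
  obtain ⟨xs, hlt, hxs, hinj, hrange'⟩ :=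
    exists_cons_enumeration_of_range_eq_fiberImage hH hy ha hrange
  have hxs' : (fun i => H (xs i) y) = a := funext hxs
  obtain ⟨b, hP, hb, hbk, hbm, hb0⟩ := hstep (m + 1) (Fin.cons y xs) hinj hrange' k.succ
    (fiberRel L₀ ψ id) (isQF_fiberRel L₀ ψ id) ((realize_fiberRel L₀ H ψ id _).2
      (by simpa [hxs'] using ⟨hlt, hreal⟩))
  replace hb0 : b 0 = Fin.cons y xs := funext (hb0 rfl)
  have hby : ∀ j, b j 0 = y := Fin.forall_fin_two.2
    ⟨by simp [hb0], (hbm 0 (Fin.succ_ne_zero k).symm).symm.trans (by simp [hb0])⟩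
  have hb' (j : Fin 2) : (∀ i : Fin m, b j i.succ < y) ∧ ψ.Realize fun i => H (b j i.succ) y := by
    simpa [realize_fiberRel, hby] using hb j
  refine ⟨fun j i => H (b j i.succ) y, ?_, fun j => (hb' j).2, ?_, ?_, ?_⟩
  · rw [← fiberImage_range hby fun j => (hb' j).1]
    refine hPQ _ y ⟨⟨(0, 0), hby 0⟩, ?_⟩ ⟨b 0 k.succ, ⟨(0, k.succ), rfl⟩, ((hb' 0).1 k).ne⟩ hP
    rintro _ ⟨⟨j, i⟩, rfl⟩
    cases i using Fin.cases with
    | zero => exact (hby j).le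
    | succ i => exact ((hb' j).1 i).le
  · exact fun heq => hbk (hH y ((hb' 0).1 k) ((hb' 1).1 k) heq)
  · exact fun i hi => congrArg (H · y) (hbm i.succ ((Fin.succ_injective _).ne hi))
  · intro _ i
    simp [hb0, hxs]

theorem rkGe_fiberImage (hH : ∀ y, Set.InjOn (fun x => H x y) (Set.Iio y)) (β : Ordinal.{u}) :
    ∀ (u : Set N) (y : N), IsGreatest u y → (u \ {y}).Nonempty →
      @rkGe _ N (fiberStructure L₀ H) 0 κ β u → rkGe L₀ M₀ 0 κ β (fiberImage H y u) := by
  let := fiberStructure L₀ H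
  induction β using Ordinal.limitRecOn with
  | zero =>
    simp only [rkGe_zero]
    exact fun _ _ hy hne h => rkBase_fiberImage hH hy hne h
  | add_one β ih =>
    simp only [rkGe_add_one]
    exact fun _ _ hy hne h => rkStep_fiberImage hH ih hy hne h
  | limit o ho ih =>
    simp only [rkGe_of_isSuccLimit ho]
    exact fun u y hy hne h β hβ => ih β hβ u y hy hne (h β hβ)

end Fiber

theorem exists_injOn_Iio {M₀ N : Type u} [Preorder N] [Nonempty M₀]
    (h : ∀ y : N, #(Set.Iio y) ≤ #M₀) :
    ∃ H : N → N → M₀, ∀ y, Set.InjOn (fun x => H x y) (Set.Iio y) := by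
  have (y : N) : ∃ f : N → M₀, Set.InjOn f (Set.Iio y) :=
    Set.exists_injOn_iff_injective.2 (let ⟨e⟩ := h y; ⟨e, e.injective⟩)
  choose f hf using this
  exact ⟨fun x y => f y x, hf⟩

/-- if `NPr⁰_α(λ; κ)` then `NPr⁰_{α+1}(λ⁺; κ)`. -/
theorem stmt_4 (κ : Cardinal.{u}) (hκ : ℵ₀ ≤ κ)
    (lam : Cardinal.{u}) (hlam : ℵ₀ ≤ lam) (α : Ordinal.{u})
    (h : ¬ Pr 0 α lam (Order.succ κ) κ) :
    ¬ Pr 0 (α + 1) (Order.succ lam) (Order.succ κ) κ := by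
  intro hPr
  unfold Pr at h
  push Not at h
  obtain ⟨L₀, M₀, _, hM₀, hL₀, β, hβ, hrk⟩ := h
  have : Nonempty M₀ := mk_ne_zero_iff.1 (hM₀ ▸ (aleph0_pos.trans_le hlam).ne')
  obtain ⟨H, hH⟩ := exists_injOn_Iio (N := (Order.succ lam).ord.ToType) (M₀ := M₀)
    fun y => by simpa [hM₀, Order.lt_succ_iff] using mk_Iio_lt y
  obtain ⟨w, -, -, hw⟩ := hPr (fiberLanguage L₀) _ (fiberStructure L₀ H) (by simp)
    (card_fiberLanguage_le L₀ hκ hL₀) (β + 1) (by simpa using hβ)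
  let := fiberStructure L₀ H
  obtain ⟨u, hfin, hu, hrku⟩ := exists_nontrivial_rkGe_of_rkGe_add_one hw
  obtain ⟨y, hyu, hymax⟩ := Set.exists_max_image u id hfin hu.nonempty
  obtain ⟨x, hxu, hxy⟩ := hu.exists_ne y
  exact hrk _ (hfin.sdiff.image _) ⟨_, x, ⟨hxu, hxy⟩, rfl⟩
    (rkGe_fiberImage hH β u y ⟨hyu, hymax⟩ ⟨x, hxu, hxy⟩ hrku)

end Sh522
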